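/- arXiv:1810.07494 — 7 statements merged into one kernel-verified Lean document; each statement's English description precedes it below -/
import Mathlib

section
/- Let m be a positive integer and p, q integers with 0 ≤ p, q ≤ m and p + q ≠ m. Then the sum over k from 0 to m of C(m,k)·(-1)^(m-k) · (Σ_{i=0}^{p} C(m-k,i)·C(k,p-i)·(-1)^i) · (Σ_{j=0}^{q} C(m-k,j)·C(k,q-j)·(-1)^j) equals 0. -/
/-!
In `R[X][X]` put `x := C X` and `y := X`. Since `(1 + x)(1 + y) - (1 - x)(1 - y) = 2(x + y)`,
the binomial theorem gives
`∑ₖ (-1)^(m-k) C(m,k) f_k(x) f_k(y) = 2^m (x + y)^m` with `f_k = (1 - X)^(m-k) (1 + X)^k`.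
The coefficient of `x^p` in `f_k` is the inner sum of the theorem, so the coefficient of `x^p y^q`
on the left is the sum in question, while on the right it vanishes unless `p + q = m`.
-/

open Finset Polynomial

variable {R : Type*} [CommRing R]

theorem coeff_one_add_C_mul_X_pow (a : R) (n i : ℕ) :
    ((1 + C a * X) ^ n).coeff i = a ^ i * n.choose i := by
  rw [add_comm, add_pow, finsetSum_coeff]
  simp_rw [one_pow, mul_one, mul_pow, ← C_pow, ← C_eq_natCast, mul_right_comm _ (X ^ _), ← C_mul,
    coeff_C_mul_X_pow, Finset.sum_ite_eq, mem_range, Nat.lt_succ_iff]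
  split_ifs with hi
  · rfl
  · rw [Nat.choose_eq_zero_of_lt (not_le.mp hi), Nat.cast_zero, mul_zero]

theorem coeff_one_sub_X_pow (n i : ℕ) :
    ((1 - X : R[X]) ^ n).coeff i = (-1) ^ i * n.choose i := by
  rw [← coeff_one_add_C_mul_X_pow, C_neg, C_1, neg_one_mul, sub_eq_add_neg]

theorem coeff_one_sub_X_pow_mul_one_add_X_pow (n k p : ℕ) :
    ((1 - X : R[X]) ^ n * (1 + X) ^ k).coeff p
      = ∑ i ∈ range (p + 1), (-1) ^ i * (n.choose i : R) * k.choose (p - i) := by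
  rw [coeff_mul, Nat.sum_antidiagonal_eq_sum_range_succ_mk]
  simp only [coeff_one_sub_X_pow, coeff_one_add_X_pow]

theorem coeff_coeff_C_mul_map_C (f g : R[X]) (p q : ℕ) :
    ((C f * g.map C).coeff q).coeff p = f.coeff p * g.coeff q := by
  rw [coeff_C_mul, coeff_map, coeff_mul_C]

theorem coeff_coeff_C_C_mul (c : R) (F : R[X][X]) (p q : ℕ) :
    ((C (C c) * F).coeff q).coeff p = c * (F.coeff q).coeff p := by
  rw [coeff_C_mul, coeff_C_mul]

theorem coeff_coeff_X_add_C_X_pow_of_add_ne {p q m : ℕ} (h : p + q ≠ m) :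
    (((X + C X : R[X][X]) ^ m).coeff q).coeff p = 0 := by
  rw [coeff_X_add_C_pow, ← C_eq_natCast, coeff_mul_C, coeff_X_pow]
  rcases le_or_gt q m with hq | hq
  · rw [if_neg (by omega), zero_mul]
  · rw [Nat.choose_eq_zero_of_lt hq, Nat.cast_zero, mul_zero]

theorem sum_neg_one_pow_mul_choose_mul_C_mul_map_C (m : ℕ) :
    ∑ k ∈ range (m + 1), C (C ((-1 : R) ^ (m - k) * m.choose k)) *
        (C ((1 - X : R[X]) ^ (m - k) * (1 + X) ^ k) * ((1 - X : R[X]) ^ (m - k) * (1 + X) ^ k).map C)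
      = C (C (2 ^ m : R)) * (X + C X) ^ m := by
  have h := add_pow ((1 + C X) * (1 + X) : R[X][X]) (-((1 - C X) * (1 - X))) m
  rw [show ((1 + C X) * (1 + X) + -((1 - C X) * (1 - X)) : R[X][X]) = 2 * (X + C X) by ring] at h
  rw [map_pow, map_pow, map_ofNat, map_ofNat, ← mul_pow, h]
  refine sum_congr rfl fun k _ => ?_
  rw [neg_pow ((1 - C X) * (1 - X) : R[X][X])]
  simp only [mul_pow, Polynomial.map_one, Polynomial.map_mul, Polynomial.map_pow,
    Polynomial.map_sub, Polynomial.map_add, map_X, map_mul, map_pow, map_sub, map_add, map_neg,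
    map_natCast, map_one]
  ring

theorem stmt_0_general (m : ℕ) (p q : ℕ) (hpq : p + q ≠ m) :
    ∑ k ∈ range (m + 1), ((-1 : ℤ)) ^ (m - k) * (m.choose k) *
      (∑ i ∈ range (p + 1), ((-1 : ℤ)) ^ i * ((m - k).choose i) * (k.choose (p - i))) *
      (∑ j ∈ range (q + 1), ((-1 : ℤ)) ^ j * ((m - k).choose j) * (k.choose (q - j))) = 0 := by
  have key := congr_arg (fun F => (F.coeff q).coeff p)
    (sum_neg_one_pow_mul_choose_mul_C_mul_map_C (R := ℤ) m)
  simp only [finsetSum_coeff, coeff_coeff_C_C_mul, coeff_coeff_C_mul_map_C,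
    coeff_one_sub_X_pow_mul_one_add_X_pow, coeff_coeff_X_add_C_X_pow_of_add_ne hpq,
    mul_zero] at key
  simpa only [mul_assoc] using key

theorem stmt_0 (m : ℕ) (hm : 0 < m) (p q : ℕ) (hp : p ≤ m) (hq : q ≤ m)
    (hpq : p + q ≠ m) :
    ∑ k ∈ range (m + 1), ((-1 : ℤ)) ^ (m - k) * (m.choose k) *
      (∑ i ∈ range (p + 1), ((-1 : ℤ)) ^ i * ((m - k).choose i) * (k.choose (p - i))) *
      (∑ j ∈ range (q + 1), ((-1 : ℤ)) ^ j * ((m - k).choose j) * (k.choose (q - j))) = 0 :=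
  stmt_0_general m p q hpq
end

section
/- Let H be a Hilbert space, T a bounded linear operator on H, and m a positive integer. If T is an m-isometry, then for every positive integer r, the power T^r is also an m-isometry. -/
/-!
Writing `f n = ‖T ^ n x‖ ^ 2`, the `m`-isometry identity for `T` at the vectors `T ^ y x` says that
the `m`-th forward difference of `f` with step `1` vanishes identically, and the one for `T ^ r`
at `x` is the `m`-th forward difference of `f` with step `r` at `0`. Since
`Δ_[r] = Δ_[1] ∘ (1 + S + ⋯ + S ^ (r - 1))` with `S` the shift, and shifts commute with
differences, `Δ_[r] ^ m` factors through `Δ_[1] ^ m`.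
-/

open Finset Function fwdDiff

section ForwardDifference

variable {M G : Type*} [AddCommMonoid M] [AddCommGroup G]

lemma fwdDiff_nsmul_eq_sum (f : M → G) (h : M) (n : ℕ) :
    Δ_[n • h] f = ∑ i ∈ range n, fun y ↦ Δ_[h] f (y + i • h) := by
  funext y
  simpa [fwdDiff, succ_nsmul, add_assoc] using
    (Finset.sum_range_sub (fun i ↦ f (y + i • h)) n).symm

lemma fwdDiff_iter_nsmul_eq_zero {f : M → G} {h : M} {m : ℕ} (hf : Δ_[h] ^[m] f = 0) (n : ℕ) :
    Δ_[n • h] ^[m] f = 0 := by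
  induction m generalizing f with
  | zero => simpa using hf
  | succ m ih =>
    have hΔf : Δ_[h] ^[m] (Δ_[h] f) = 0 := by rwa [← iterate_succ_apply]
    funext y
    simp [iterate_succ_apply, fwdDiff_nsmul_eq_sum, fwdDiff_iter_comp_add, ih hΔf]

end ForwardDifference

lemma sum_choose_norm_sq_pow_eq_fwdDiff_iter {𝕜 E : Type*} [Semiring 𝕜]
    [SeminormedAddCommGroup E] [Module 𝕜 E] (T : E →L[𝕜] E) (x : E) (m r y : ℕ) :
    ∑ k ∈ range (m + 1), (-1 : ℝ) ^ (m - k) * m.choose k * ‖((T ^ r) ^ k) ((T ^ y) x)‖ ^ 2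
      = Δ_[r] ^[m] (fun n ↦ ‖(T ^ n) x‖ ^ 2) y := by
  rw [fwdDiff_iter_eq_sum_shift]
  refine Finset.sum_congr rfl fun k _ ↦ ?_
  rw [← pow_mul, ← mul_apply_eq_comp, ← pow_add, zsmul_eq_mul, smul_eq_mul,
    add_comm y, mul_comm r]
  push_cast
  rfl

theorem stmt_3_general {H : Type*} [NormedAddCommGroup H] [InnerProductSpace ℂ H]
    (T : H →L[ℂ] H) (m : ℕ)
    (hT : ∀ x : H, ∑ k ∈ range (m + 1),
      ((-1 : ℝ)) ^ (m - k) * (m.choose k) * ‖(T ^ k) x‖ ^ 2 = 0)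
    (r : ℕ) :
    ∀ x : H, ∑ k ∈ range (m + 1),
      ((-1 : ℝ)) ^ (m - k) * (m.choose k) * ‖((T ^ r) ^ k) x‖ ^ 2 = 0 := by
  intro x
  have hΔ : Δ_[1] ^[m] (fun n ↦ ‖(T ^ n) x‖ ^ 2) = 0 := by
    funext y
    rw [← sum_choose_norm_sq_pow_eq_fwdDiff_iter]
    simpa using hT ((T ^ y) x)
  have hΔr := congr_fun (fwdDiff_iter_nsmul_eq_zero hΔ r) 0
  rw [smul_eq_mul, mul_one, ← sum_choose_norm_sq_pow_eq_fwdDiff_iter] at hΔr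
  simpa using hΔr

theorem stmt_3 {H : Type*} [NormedAddCommGroup H] [InnerProductSpace ℂ H] [CompleteSpace H]
    (T : H →L[ℂ] H) (m : ℕ) (hm : 0 < m)
    (hT : ∀ x : H, ∑ k ∈ range (m + 1),
      ((-1 : ℝ)) ^ (m - k) * (m.choose k) * ‖(T ^ k) x‖ ^ 2 = 0)
    (r : ℕ) (hr : 0 < r) :
    ∀ x : H, ∑ k ∈ range (m + 1),
      ((-1 : ℝ)) ^ (m - k) * (m.choose k) * ‖((T ^ r) ^ k) x‖ ^ 2 = 0 :=
  stmt_3_general T m hT r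
end

section
/- Let {T(t)}_{t≥0} be a C₀-semigroup on a Hilbert space H and m a positive integer. If there exist 0 < t₁ < t₂ such that T(t) is an m-isometry for every t ∈ [t₁, t₂], then T(t) is an m-isometry for every t ≥ 0. -/
/-!
Fix a small step `s > 0` and put `a j = ‖T(js) x‖²`. That `T(ρ s)` is an `m`-isometry says that,
for every `x`, the polynomial `(X ^ ρ - 1) ^ m` annihilates `a` under the shift `a ↦ a (· + 1)`.
For `s` small enough two consecutive multiples `r s`, `(r + 1) s` lie in `[t₁, t₂]`, and since the
geometric sums `1 + ⋯ + X ^ (r - 1)` and `1 + ⋯ + X ^ r` are coprime, the ideal generated by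
`(X ^ r - 1) ^ m` and `(X ^ (r + 1) - 1) ^ m` contains `(X - 1) ^ m`, hence every `(X ^ n - 1) ^ m`.
Choosing `s` with `t = n s` gives the claim for `T(t)`.
-/

open Finset Polynomial

namespace Polynomial

variable {R : Type*} [CommRing R]

theorem isCoprime_geom_sum_X_succ (r : ℕ) :
    IsCoprime (∑ i ∈ range r, (X : R[X]) ^ i) (∑ i ∈ range (r + 1), (X : R[X]) ^ i) :=
  ⟨-X, 1, by rw [geom_sum_succ]; ring⟩

theorem X_sub_one_pow_mem_span_X_pow_sub_one_pow (r m : ℕ) :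
    ((X : R[X]) - 1) ^ m ∈
      Ideal.span {((X : R[X]) ^ r - 1) ^ m, ((X : R[X]) ^ (r + 1) - 1) ^ m} := by
  obtain ⟨u, v, huv⟩ := (isCoprime_geom_sum_X_succ (R := R) r).pow (m := m) (n := m)
  refine Ideal.mem_span_pair.mpr ⟨u, v, ?_⟩
  rw [← geom_sum_mul, ← geom_sum_mul, mul_pow, mul_pow]
  linear_combination ((X : R[X]) - 1) ^ m * huv

theorem X_pow_sub_one_pow_mem_span_X_pow_sub_one_pow (r m n : ℕ) :
    ((X : R[X]) ^ n - 1) ^ m ∈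
      Ideal.span {((X : R[X]) ^ r - 1) ^ m, ((X : R[X]) ^ (r + 1) - 1) ^ m} :=
  Ideal.mem_of_dvd _ (pow_dvd_pow_of_dvd (sub_one_dvd_pow_sub_one X n) m)
    (X_sub_one_pow_mem_span_X_pow_sub_one_pow r m)

theorem aeval_apply_eq_zero_of_mem_span_pair {M : Type*} [AddCommGroup M] [Module R M]
    {f : Module.End R M} {v : M} {p q₁ q₂ : R[X]} (hp : p ∈ Ideal.span {q₁, q₂})
    (h₁ : aeval f q₁ v = 0) (h₂ : aeval f q₂ v = 0) : aeval f p v = 0 := by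
  obtain ⟨u, w, rfl⟩ := Ideal.mem_span_pair.mp hp
  simp only [map_add, map_mul, LinearMap.add_apply, Module.End.mul_apply, h₁, h₂, map_zero,
    add_zero]

end Polynomial

section Sequences

variable {R : Type*} [CommRing R]

variable (R) in
abbrev seqShift : Module.End R (ℕ → R) := LinearMap.funLeft R R (· + 1)

theorem seqShift_pow_apply (j : ℕ) (a : ℕ → R) (b : ℕ) : (seqShift R ^ j) a b = a (b + j) := by
  induction j generalizing a b with
  | zero => rfl
  | succ j ih => rw [pow_succ, Module.End.mul_apply, ih, LinearMap.funLeft_apply, add_assoc]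

theorem aeval_seqShift_X_pow_sub_one_pow_apply (r m : ℕ) (a : ℕ → R) (b : ℕ) :
    aeval (seqShift R) (((X : R[X]) ^ r - 1) ^ m) a b
      = ∑ k ∈ range (m + 1), (-1 : R) ^ (m - k) * m.choose k * a (b + k * r) := by
  rw [sub_eq_add_neg, add_pow, map_sum, LinearMap.sum_apply, Finset.sum_apply]
  refine sum_congr rfl fun k _ => ?_
  rw [mul_assoc, ← pow_mul, mul_comm r k, ← C_1, ← C_neg, ← C_pow, ← C_eq_natCast, ← C_mul,
    map_mul, aeval_C, Module.End.mul_apply, Module.algebraMap_end_apply, map_pow, aeval_X,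
    map_smul, Pi.smul_apply, seqShift_pow_apply, smul_eq_mul]

theorem sum_choose_mul_eq_zero_of_step_succ {a : ℕ → R} {r m : ℕ}
    (h₁ : ∀ b, ∑ k ∈ range (m + 1), (-1 : R) ^ (m - k) * m.choose k * a (b + k * r) = 0)
    (h₂ : ∀ b, ∑ k ∈ range (m + 1), (-1 : R) ^ (m - k) * m.choose k * a (b + k * (r + 1)) = 0)
    (n b : ℕ) : ∑ k ∈ range (m + 1), (-1 : R) ^ (m - k) * m.choose k * a (b + k * n) = 0 := by
  have hann := aeval_apply_eq_zero_of_mem_span_pair (f := seqShift R) (v := a)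
    (X_pow_sub_one_pow_mem_span_X_pow_sub_one_pow r m n)
    (funext fun b => (aeval_seqShift_X_pow_sub_one_pow_apply r m a b).trans (h₁ b))
    (funext fun b => (aeval_seqShift_X_pow_sub_one_pow_apply (r + 1) m a b).trans (h₂ b))
  rw [← aeval_seqShift_X_pow_sub_one_pow_apply, hann, Pi.zero_apply]

end Sequences

section MIsometry

variable {R E : Type*} [Ring R] [SeminormedAddCommGroup E] [Module R E]

def IsMIsometry (m : ℕ) (S : E →L[R] E) : Prop :=
  ∀ x, ∑ k ∈ range (m + 1), (-1 : ℝ) ^ (m - k) * m.choose k * ‖(S ^ k) x‖ ^ 2 = 0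

theorem isMIsometry_pow_iff {m j : ℕ} {S : E →L[R] E} :
    IsMIsometry m (S ^ j) ↔ ∀ x b,
      ∑ k ∈ range (m + 1), (-1 : ℝ) ^ (m - k) * m.choose k * ‖(S ^ (b + k * j)) x‖ ^ 2 = 0 := by
  have hpow (b k : ℕ) (x : E) : ((S ^ j) ^ k) ((S ^ b) x) = (S ^ (b + k * j)) x := by
    rw [← pow_mul, ← mul_apply_eq_comp, ← pow_add, add_comm, mul_comm]
  refine ⟨fun h x b => ?_, fun h x => ?_⟩
  · simpa only [hpow] using h ((S ^ b) x)
  · simpa only [← hpow, pow_zero, one_apply_eq_self] using h x 0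

theorem IsMIsometry.pow_of_pow_of_pow_succ {m r : ℕ} {S : E →L[R] E}
    (h₁ : IsMIsometry m (S ^ r)) (h₂ : IsMIsometry m (S ^ (r + 1))) (n : ℕ) :
    IsMIsometry m (S ^ n) :=
  isMIsometry_pow_iff.2 fun x =>
    sum_choose_mul_eq_zero_of_step_succ (a := fun j => ‖(S ^ j) x‖ ^ 2)
      (isMIsometry_pow_iff.1 h₁ x) (isMIsometry_pow_iff.1 h₂ x) n

theorem semigroup_pow_eq_nat_mul {T : ℝ → E →L[R] E} (hT0 : T 0 = 1)
    (hTsem : ∀ s t : ℝ, 0 ≤ s → 0 ≤ t → T (s + t) = T t ∘L T s) {u : ℝ} (hu : 0 ≤ u) (k : ℕ) :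
    T u ^ k = T (k * u) := by
  induction k with
  | zero => simp [hT0]
  | succ k ih =>
    rw [pow_succ, ih, Nat.cast_succ, add_one_mul, add_comm, hTsem u _ hu (by positivity)]
    rfl

end MIsometry

theorem exists_nat_mul_eq_of_nonneg {t δ : ℝ} (ht : 0 ≤ t) (hδ : 0 < δ) :
    ∃ n : ℕ, ∃ s, 0 < s ∧ s ≤ δ ∧ n * s = t := by
  rcases ht.eq_or_lt with rfl | ht
  · exact ⟨0, δ, hδ, le_rfl, by simp⟩
  have hn : (0 : ℝ) < ⌈t / δ⌉₊ := Nat.cast_pos.2 (Nat.ceil_pos.2 (div_pos ht hδ))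
  refine ⟨⌈t / δ⌉₊, t / ⌈t / δ⌉₊, div_pos ht hn, ?_, mul_div_cancel₀ t hn.ne'⟩
  rw [div_le_iff₀ hn, ← div_le_iff₀' hδ]
  exact Nat.le_ceil _

theorem exists_nat_mul_mem_Icc_and_succ {t₁ t₂ s : ℝ} (ht₁ : 0 ≤ t₁) (hs : 0 < s)
    (h2s : 2 * s ≤ t₂ - t₁) :
    ∃ r : ℕ, r * s ∈ Set.Icc t₁ t₂ ∧ (r + 1) * s ∈ Set.Icc t₁ t₂ := by
  have hle : t₁ / s ≤ ⌈t₁ / s⌉₊ := Nat.le_ceil _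
  have hlt : (⌈t₁ / s⌉₊ : ℝ) < t₁ / s + 1 := Nat.ceil_lt_add_one (div_nonneg ht₁ hs.le)
  rw [div_le_iff₀ hs] at hle
  rw [← sub_lt_iff_lt_add, lt_div_iff₀ hs, sub_mul] at hlt
  exact ⟨⌈t₁ / s⌉₊, ⟨hle, by linarith⟩, ⟨by linarith, by linarith⟩⟩

theorem stmt_5_general {H : Type*} [NormedAddCommGroup H] [InnerProductSpace ℂ H]
    (T : ℝ → H →L[ℂ] H) (m : ℕ)
    (hT0 : T 0 = 1)
    (hTsem : ∀ s t : ℝ, 0 ≤ s → 0 ≤ t → T (s + t) = T t ∘L T s)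
    (t₁ t₂ : ℝ) (ht₁ : 0 < t₁) (ht₁₂ : t₁ < t₂)
    (hiso : ∀ t ∈ Set.Icc t₁ t₂, ∀ x : H, ∑ k ∈ range (m + 1),
      ((-1 : ℝ)) ^ (m - k) * (m.choose k) * ‖((T t) ^ k) x‖ ^ 2 = 0) :
    ∀ t : ℝ, 0 ≤ t → ∀ x : H, ∑ k ∈ range (m + 1),
      ((-1 : ℝ)) ^ (m - k) * (m.choose k) * ‖((T t) ^ k) x‖ ^ 2 = 0 := by
  intro t ht
  obtain ⟨n, s, hs, hsδ, rfl⟩ := exists_nat_mul_eq_of_nonneg ht (half_pos (sub_pos.2 ht₁₂))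
  obtain ⟨r, hr, hr₁⟩ := exists_nat_mul_mem_Icc_and_succ (t₂ := t₂) ht₁.le hs (by linarith)
  have hpow := semigroup_pow_eq_nat_mul hT0 hTsem hs.le
  have h₁ : IsMIsometry m (T s ^ r) := by rw [hpow]; exact hiso _ hr
  have h₂ : IsMIsometry m (T s ^ (r + 1)) := by rw [hpow, Nat.cast_succ]; exact hiso _ hr₁
  rw [← hpow]
  exact h₁.pow_of_pow_of_pow_succ h₂ n

theorem stmt_5 {H : Type*} [NormedAddCommGroup H] [InnerProductSpace ℂ H] [CompleteSpace H]
    (T : ℝ → H →L[ℂ] H) (m : ℕ) (hm : 0 < m)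
    (hT0 : T 0 = 1)
    (hTsem : ∀ s t : ℝ, 0 ≤ s → 0 ≤ t → T (s + t) = T t ∘L T s)
    (hTcont : ∀ x : H, Filter.Tendsto (fun t => T t x) (nhdsWithin 0 (Set.Ioi 0)) (nhds x))
    (t₁ t₂ : ℝ) (ht₁ : 0 < t₁) (ht₁₂ : t₁ < t₂)
    (hiso : ∀ t ∈ Set.Icc t₁ t₂, ∀ x : H, ∑ k ∈ range (m + 1),
      ((-1 : ℝ)) ^ (m - k) * (m.choose k) * ‖((T t) ^ k) x‖ ^ 2 = 0) :
    ∀ t : ℝ, 0 ≤ t → ∀ x : H, ∑ k ∈ range (m + 1),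
      ((-1 : ℝ)) ^ (m - k) * (m.choose k) * ‖((T t) ^ k) x‖ ^ 2 = 0 :=
  stmt_5_general T m hT0 hTsem t₁ t₂ ht₁ ht₁₂ hiso
end

section
/- Let {T(t)}_{t≥0} be a C₀-semigroup on a separable Hilbert space H such that T(t) is an m-isometry for every t ≥ 0. Then for each x ∈ H, the function t ↦ ‖T(t)x‖² on [0,∞) is a polynomial of degree less than m. -/
/-!
Applying the `m`-isometry identity of `T τ` to the vector `T t x` says exactly that the `m`-th
forward difference with step `τ` of `f t = ‖T t x‖ ^ 2` vanishes at every `t ≥ 0`. On each grid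
`(1 / N) ℕ` the Gregory–Newton formula then makes `f` a polynomial of degree `< m`; all these
polynomials agree on `ℕ`, hence coincide, and strong continuity of the semigroup makes `f`
right-continuous, which carries the identity from the dense set of grid points to all of `[0, ∞)`.
-/

open Finset Filter Topology Polynomial fwdDiff

lemma fwdDiff_iter_comp_addMonoidHom {M M' G : Type*} [AddCommMonoid M] [AddCommMonoid M']
    [AddCommGroup G] (g : M →+ M') (f : M' → G) (h : M) (n : ℕ) (y : M) :
    (Δ_[h])^[n] (f ∘ g) y = (Δ_[g h])^[n] f (g y) := by
  simp [fwdDiff_iter_eq_sum_shift, map_nsmul]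

lemma fwdDiff_iter_eq_zero_of_le {M G : Type*} [AddCommMonoid M] [AddCommGroup G]
    {h : M} {f : M → G} {m k : ℕ} (hf : (Δ_[h])^[m] f = 0) (hk : m ≤ k) :
    (Δ_[h])^[k] f = 0 := by
  obtain ⟨j, rfl⟩ := Nat.exists_eq_add_of_le hk
  rw [add_comm, Function.iterate_add_apply, hf]
  exact Function.iterate_fixed (fwdDiff_const h 0) j

/-- By Gregory–Newton, `u n = ∑ k < m, n.choose k • Δ^k u 0`, and `n.choose k` is the value at `n`
of the polynomial `descPochhammer K k / k!`. -/
lemma exists_polynomial_of_fwdDiff_iter_eq_zero {K : Type*} [Field K] [CharZero K]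
    {u : ℕ → K} {m : ℕ} (hu : (Δ_[1])^[m] u = 0) :
    ∃ P : K[X], P.degree < m ∧ ∀ n : ℕ, u n = P.eval (n : K) := by
  refine ⟨∑ k ∈ range m, ((Δ_[1])^[k] u 0 / k.factorial) • descPochhammer K k, ?_, fun n ↦ ?_⟩
  · refine mem_degreeLT.mp (Submodule.sum_mem _ fun k hk ↦ mem_degreeLT.mpr ?_)
    calc _ ≤ (descPochhammer K k).degree := degree_smul_le _ _
      _ ≤ k := (degree_le_natDegree).trans_eq (by rw [descPochhammer_natDegree])
      _ < m := by exact_mod_cast mem_range.mp hk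
  · have hvanish : ∀ k, m ≤ k → (Δ_[1])^[k] u 0 = 0 := fun k hk ↦
      congr_fun (fwdDiff_iter_eq_zero_of_le hu hk) 0
    have hterm : ∀ k, n.choose k • (Δ_[1])^[k] u 0 =
        eval (n : K) (((Δ_[1])^[k] u 0 / k.factorial) • descPochhammer K k) := by
      intro k
      rw [eval_smul, descPochhammer_eval_eq_descFactorial, Nat.descFactorial_eq_factorial_mul_choose,
        smul_eq_mul, nsmul_eq_mul]
      have : (k.factorial : K) ≠ 0 := Nat.cast_ne_zero.mpr k.factorial_ne_zero
      push_cast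
      field_simp
    calc u n = ∑ k ∈ range (n + 1), n.choose k • (Δ_[1])^[k] u 0 := by
          simpa using shift_eq_sum_fwdDiff_iter 1 u n 0
      _ = ∑ k ∈ range (n + 1 + m), n.choose k • (Δ_[1])^[k] u 0 :=
          sum_subset (range_subset_range.mpr (by omega)) fun k _ hk ↦ by
            rw [Nat.choose_eq_zero_of_lt (by simpa using hk), zero_smul]
      _ = ∑ k ∈ range m, n.choose k • (Δ_[1])^[k] u 0 :=
          (sum_subset (range_subset_range.mpr (by omega)) fun k _ hk ↦ by
            rw [hvanish k (by simpa using hk), smul_zero]).symm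
      _ = _ := by rw [eval_finsetSum]; exact sum_congr rfl fun k _ ↦ hterm k

lemma exists_polynomial_of_fwdDiff_iter_natCast_div_eq_zero {K : Type*} [Field K] [CharZero K]
    {f : K → K} {m : ℕ} {c : K} (hc : c ≠ 0) (hf : ∀ n : ℕ, (Δ_[c⁻¹])^[m] f (n / c) = 0) :
    ∃ P : K[X], P.degree < m ∧ ∀ n : ℕ, f (n / c) = P.eval (n / c) := by
  let g : ℕ →+ K := (AddMonoidHom.mulRight c⁻¹).comp (Nat.castAddMonoidHom K)
  have hg : ∀ n : ℕ, g n = n / c := fun n ↦ (div_eq_mul_inv _ _).symm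
  obtain ⟨P, hPdeg, hP⟩ : ∃ P : K[X], P.degree < m ∧ ∀ n : ℕ, (f ∘ g) n = P.eval (n : K) :=
    exists_polynomial_of_fwdDiff_iter_eq_zero <| funext fun n ↦ by
      simpa [fwdDiff_iter_comp_addMonoidHom, hg] using hf n
  refine ⟨P.comp (C c * X), ?_, fun n ↦ ?_⟩
  · rwa [degree_comp (by rw [degree_C_mul_X hc]; exact zero_lt_one), degree_C_mul_X hc, mul_one]
  · simpa [hg, mul_div_cancel₀ _ hc] using hP n

lemma exists_polynomial_eq_natCast_div_of_fwdDiff_iter_eq_zero {f : ℝ → ℝ} {m : ℕ}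
    (hf : ∀ t, 0 ≤ t → ∀ τ, 0 < τ → (Δ_[τ])^[m] f t = 0) :
    ∃ P : ℝ[X], P.degree < m ∧ ∀ N n : ℕ, f ((n : ℝ) / (N + 1)) = P.eval ((n : ℝ) / (N + 1)) := by
  choose Q hQdeg hQ using fun N : ℕ ↦
    exists_polynomial_of_fwdDiff_iter_natCast_div_eq_zero (f := f) (m := m) (c := N + 1)
      (by positivity) fun n ↦ hf _ (by positivity) _ (by positivity)
  have hQ_natCast : ∀ N n : ℕ, f n = (Q N).eval (n : ℝ) := fun N n ↦ by
    have hN : (N : ℝ) + 1 ≠ 0 := by positivity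
    simpa [mul_div_cancel_right₀ _ hN] using hQ N (n * (N + 1))
  have hQ_eq : ∀ N, Q N = Q 0 := fun N ↦
    eq_of_infinite_eval_eq _ _ <| (Set.infinite_range_of_injective Nat.cast_injective).mono <| by
      rintro _ ⟨n, rfl⟩
      exact (hQ_natCast N n).symm.trans (hQ_natCast 0 n)
  exact ⟨Q 0, hQdeg 0, fun N n ↦ hQ_eq N ▸ hQ N n⟩

lemma tendsto_natCast_floor_add_one_div_nhdsGT {t : ℝ} (ht : 0 ≤ t) :
    Tendsto (fun N : ℕ ↦ ((⌊t * (N + 1)⌋₊ + 1 : ℕ) : ℝ) / (N + 1)) atTop (𝓝[>] t) := by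
  have hlt : ∀ N : ℕ, t < ((⌊t * (N + 1)⌋₊ + 1 : ℕ) : ℝ) / (N + 1) := fun N ↦ by
    rw [lt_div_iff₀ (by positivity)]
    exact_mod_cast Nat.lt_floor_add_one _
  have hle : ∀ N : ℕ, ((⌊t * (N + 1)⌋₊ + 1 : ℕ) : ℝ) / (N + 1) ≤ t + 1 / (N + 1) := fun N ↦ by
    rw [div_le_iff₀ (by positivity), add_mul, one_div_mul_cancel (by positivity)]
    push_cast
    gcongr
    exact Nat.floor_le (by positivity)
  refine tendsto_nhdsWithin_iff.mpr ⟨?_, Eventually.of_forall hlt⟩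
  refine tendsto_of_tendsto_of_tendsto_of_le_of_le tendsto_const_nhds ?_ (fun N ↦ (hlt N).le) hle
  simpa using tendsto_one_div_add_atTop_nhds_zero_nat.const_add t

lemma exists_polynomial_eqOn_of_fwdDiff_iter_eq_zero {f : ℝ → ℝ} {m : ℕ}
    (hf_cont : ∀ t, 0 ≤ t → Tendsto f (𝓝[>] t) (𝓝 (f t)))
    (hf : ∀ t, 0 ≤ t → ∀ τ, 0 < τ → (Δ_[τ])^[m] f t = 0) :
    ∃ P : ℝ[X], P.degree < m ∧ ∀ t, 0 ≤ t → f t = P.eval t := by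
  obtain ⟨P, hPdeg, hP⟩ := exists_polynomial_eq_natCast_div_of_fwdDiff_iter_eq_zero hf
  refine ⟨P, hPdeg, fun t ht ↦ ?_⟩
  have hgrid := tendsto_natCast_floor_add_one_div_nhdsGT ht
  exact tendsto_nhds_unique ((hf_cont t ht).comp hgrid)
    ((P.continuous.continuousWithinAt.tendsto.comp hgrid).congr fun N ↦ (hP N _).symm)

section Semigroup

variable {R E : Type*} [Semiring R] [SeminormedAddCommGroup E] [Module R E]
  {T : ℝ → E →L[R] E}

lemma semigroup_pow_apply (hT : ∀ s t : ℝ, 0 ≤ s → 0 ≤ t → T (s + t) = T t ∘L T s)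
    {τ t : ℝ} (hτ : 0 ≤ τ) (ht : 0 ≤ t) (k : ℕ) (x : E) :
    (T τ ^ k) (T t x) = T (t + k * τ) x := by
  induction k generalizing t with
  | zero => simp
  | succ k ih =>
    have hstep : T τ (T t x) = T (t + τ) x := by rw [hT t τ ht hτ]; rfl
    calc (T τ ^ (k + 1)) (T t x) = (T τ ^ k) (T τ (T t x)) := rfl
      _ = T (t + (k + 1 : ℕ) * τ) x := by rw [hstep, ih (by positivity)]; push_cast; ring_nf

lemma semigroup_tendsto_nhdsGT (hT : ∀ s t : ℝ, 0 ≤ s → 0 ≤ t → T (s + t) = T t ∘L T s)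
    (hT_cont : ∀ x, Tendsto (fun t ↦ T t x) (𝓝[>] 0) (𝓝 x))
    {t : ℝ} (ht : 0 ≤ t) (x : E) : Tendsto (fun s ↦ T s x) (𝓝[>] t) (𝓝 (T t x)) := by
  have hshift : Tendsto (fun s ↦ s - t) (𝓝[>] t) (𝓝[>] 0) :=
    tendsto_nhdsWithin_iff.mpr ⟨tendsto_nhdsWithin_of_tendsto_nhds
      ((continuous_sub_right t).tendsto' t 0 (sub_self t)),
      eventually_nhdsWithin_of_forall fun s hs ↦ Set.mem_Ioi.mpr (sub_pos.mpr hs)⟩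
  refine ((hT_cont (T t x)).comp hshift).congr' <| eventually_nhdsWithin_of_forall fun s hs ↦ ?_
  simp [← ContinuousLinearMap.comp_apply, ← hT t (s - t) ht (sub_nonneg.mpr (le_of_lt hs))]

lemma fwdDiff_iter_semigroup_norm_sq (hT : ∀ s t : ℝ, 0 ≤ s → 0 ≤ t → T (s + t) = T t ∘L T s)
    {τ t : ℝ} (hτ : 0 ≤ τ) (ht : 0 ≤ t) (m : ℕ) (x : E) :
    (Δ_[τ])^[m] (fun s ↦ ‖T s x‖ ^ 2) t =
      ∑ k ∈ range (m + 1), (-1 : ℝ) ^ (m - k) * m.choose k * ‖(T τ ^ k) (T t x)‖ ^ 2 := by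
  rw [fwdDiff_iter_eq_sum_shift]
  refine sum_congr rfl fun k _ ↦ ?_
  rw [semigroup_pow_apply hT hτ ht, zsmul_eq_mul, nsmul_eq_mul]
  push_cast
  rfl

end Semigroup

theorem stmt_6_general {H : Type*} [NormedAddCommGroup H] [InnerProductSpace ℂ H]
    (T : ℝ → H →L[ℂ] H) (m : ℕ)
    (hTsem : ∀ s t : ℝ, 0 ≤ s → 0 ≤ t → T (s + t) = T t ∘L T s)
    (hTcont : ∀ x : H, Filter.Tendsto (fun t => T t x) (nhdsWithin 0 (Set.Ioi 0)) (nhds x))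
    (hiso : ∀ t : ℝ, 0 ≤ t → ∀ x : H, ∑ k ∈ range (m + 1),
      ((-1 : ℝ)) ^ (m - k) * (m.choose k) * ‖((T t) ^ k) x‖ ^ 2 = 0) :
    ∀ x : H, ∃ p : Polynomial ℝ, p.degree < m ∧
      ∀ t : ℝ, 0 ≤ t → ‖T t x‖ ^ 2 = p.eval t := fun x ↦
  exists_polynomial_eqOn_of_fwdDiff_iter_eq_zero
    (fun t ht ↦ ((semigroup_tendsto_nhdsGT hTsem hTcont ht x).norm.pow 2))
    (fun t ht τ hτ ↦ (fwdDiff_iter_semigroup_norm_sq hTsem hτ.le ht m x).trans (hiso τ hτ.le _))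

theorem stmt_6 {H : Type*} [NormedAddCommGroup H] [InnerProductSpace ℂ H] [CompleteSpace H]
    [TopologicalSpace.SeparableSpace H]
    (T : ℝ → H →L[ℂ] H) (m : ℕ) (hm : 0 < m)
    (hT0 : T 0 = 1)
    (hTsem : ∀ s t : ℝ, 0 ≤ s → 0 ≤ t → T (s + t) = T t ∘L T s)
    (hTcont : ∀ x : H, Filter.Tendsto (fun t => T t x) (nhdsWithin 0 (Set.Ioi 0)) (nhds x))
    (hiso : ∀ t : ℝ, 0 ≤ t → ∀ x : H, ∑ k ∈ range (m + 1),
      ((-1 : ℝ)) ^ (m - k) * (m.choose k) * ‖((T t) ^ k) x‖ ^ 2 = 0) :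
    ∀ x : H, ∃ p : Polynomial ℝ, p.degree < m ∧
      ∀ t : ℝ, 0 ≤ t → ‖T t x‖ ^ 2 = p.eval t :=
  stmt_6_general T m hTsem hTcont hiso
end

section
/- Let f : [0,∞) → ℝ be continuous and m a positive integer. Suppose Σ_{k=0}^{m} C(m,k)·(-1)^(m-k)·f(t + kτ) = 0 for all t ≥ 0 and all τ > 0. Then f is the restriction to [0,∞) of a polynomial of degree less than m. -/
open Finset Polynomial

/-! For every step `h > 0` the difference equation propagates the first `m` values of `f` along
`h ℕ`, so `f` agrees there with its Lagrange interpolant `Q_h` at `0, h, …, (m-1) h`, a polynomial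
of degree `< m`. The interpolants for the steps `1` and `1 / N` agree on `ℕ`, hence coincide, so a
single polynomial matches `f` on all nonnegative rationals and, by continuity, on `[0, ∞)`. -/

/-- Gregory–Newton: `g (n • h) = ∑ k, n.choose k • Δ^k g 0`, and every `Δ^k g 0` vanishes: for
`k < m` it only involves the values `g (i • h)`, `i < m`, and for `k ≥ m` it is a difference of
`Δ^m g`. -/
theorem apply_nsmul_eq_zero_of_fwdDiff_iter_eq_zero {M G : Type*} [AddCommMonoid M]
    [AddCommGroup G] {g : M → G} {h : M} {m : ℕ}
    (hΔ : ∀ n : ℕ, (fwdDiff h)^[m] g (n • h) = 0) (hinit : ∀ k < m, g (k • h) = 0) (n : ℕ) :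
    g (n • h) = 0 := by
  have hΔ_zero : ∀ k, (fwdDiff h)^[k] g 0 = 0 := by
    intro k
    rcases lt_or_ge k m with hk | hk
    · rw [fwdDiff_iter_eq_sum_shift]
      refine sum_eq_zero fun i hi => ?_
      rw [zero_add, hinit i (by grind), smul_zero]
    · obtain ⟨j, rfl⟩ := Nat.exists_eq_add_of_le' hk
      rw [Function.iterate_add_apply, fwdDiff_iter_eq_sum_shift]
      refine sum_eq_zero fun i _ => ?_
      rw [zero_add, hΔ, smul_zero]
  simpa [hΔ_zero] using shift_eq_sum_fwdDiff_iter h g n 0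

theorem fwdDiff_iter_eq_sum_mul {R : Type*} [CommRing R] (g : R → R) (m : ℕ) (t τ : R) :
    (fwdDiff τ)^[m] g t = ∑ k ∈ range (m + 1), (-1 : R) ^ (m - k) * m.choose k * g (t + k * τ) := by
  rw [fwdDiff_iter_eq_sum_shift]
  refine sum_congr rfl fun k _ => ?_
  rw [zsmul_eq_mul, nsmul_eq_mul]
  push_cast
  ring

theorem Polynomial.fwdDiff_iter_eval_eq_zero_of_degree_lt {R : Type*} [CommRing R] {P : R[X]}
    {n : ℕ} (hP : P.degree < n) (h : R) : (fwdDiff h)^[n] P.eval = 0 := by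
  rcases eq_or_ne P 0 with rfl | hP0
  · funext y
    simp [fwdDiff_iter_eq_sum_shift]
  funext y
  -- rescale the step `h` at base point `y` to the step `1` at `0`
  have hdeg : (P.comp (C h * X + C y)).natDegree < n :=
    calc (P.comp (C h * X + C y)).natDegree ≤ P.natDegree * (C h * X + C y).natDegree :=
          natDegree_comp_le
      _ ≤ P.natDegree * 1 := Nat.mul_le_mul_left _ natDegree_linear_le
      _ < n := by rwa [mul_one, natDegree_lt_iff_degree_lt hP0]
  have := congr_fun (fwdDiff_iter_eq_zero_of_degree_lt hdeg) 0
  rw [fwdDiff_iter_eq_sum_shift] at this ⊢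
  refine (sum_congr rfl fun k _ => ?_).trans this
  simp only [eval_comp, eval_add, eval_mul, eval_C, eval_X, zero_add, nsmul_eq_mul, mul_one]
  ring_nf

theorem eq_eval_nsmul_of_fwdDiff_iter_eq_zero {R : Type*} [CommRing R] {f : R → R} {h : R}
    {m : ℕ} (hΔ : ∀ n : ℕ, (fwdDiff h)^[m] f (n • h) = 0)
    {Q : R[X]} (hQ : Q.degree < m) (hinit : ∀ k < m, f (k • h) = Q.eval (k • h)) (n : ℕ) :
    f (n • h) = Q.eval (n • h) := by
  have hsub := fwdDiff_iter_add h (f - Q.eval) Q.eval m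
  rw [sub_add_cancel, fwdDiff_iter_eval_eq_zero_of_degree_lt hQ, add_zero] at hsub
  have hΔ' : ∀ n : ℕ, (fwdDiff h)^[m] (f - Q.eval) (n • h) = 0 := fun n => hsub ▸ hΔ n
  exact sub_eq_zero.mp <|
    apply_nsmul_eq_zero_of_fwdDiff_iter_eq_zero hΔ' (fun k hk => sub_eq_zero.mpr (hinit k hk)) n

theorem exists_degree_lt_eval_nsmul_eq {F : Type*} [Field F] [CharZero F] {f : F → F} {h : F}
    {m : ℕ} (hh : h ≠ 0) (hΔ : ∀ n : ℕ, (fwdDiff h)^[m] f (n • h) = 0) :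
    ∃ Q : F[X], Q.degree < m ∧ ∀ n : ℕ, f (n • h) = Q.eval (n • h) := by
  have hinj : Set.InjOn (fun k : ℕ => k • h) (range m) := fun a _ b _ hab =>
    Nat.cast_injective (mul_right_cancel₀ hh (by simpa only [nsmul_eq_mul] using hab))
  have hQ := Lagrange.degree_interpolate_lt (fun k => f (k • h)) hinj
  rw [card_range] at hQ
  exact ⟨_, hQ, eq_eval_nsmul_of_fwdDiff_iter_eq_zero hΔ hQ fun k hk =>
    (Lagrange.eval_interpolate_at_node (fun k => f (k • h)) hinj (mem_range.mpr hk)).symm⟩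

theorem Real.Ici_zero_subset_closure_natCast_div_succ :
    Set.Ici (0 : ℝ) ⊆ closure {x | ∃ n N : ℕ, x = n / (N + 1)} := by
  intro t ht
  rw [Metric.mem_closure_iff]
  intro ε hε
  obtain ⟨N, hN⟩ := exists_nat_one_div_lt hε
  have hN0 : (0 : ℝ) < N + 1 := by positivity
  have htN : 0 ≤ t * (N + 1) := mul_nonneg ht hN0.le
  refine ⟨⌈t * (N + 1)⌉₊ / (N + 1), ⟨_, N, rfl⟩, ?_⟩
  have hle : t ≤ ⌈t * (N + 1)⌉₊ / (N + 1) := by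
    rw [le_div_iff₀ hN0]; exact Nat.le_ceil _
  have hlt : ⌈t * (N + 1)⌉₊ / (N + 1) < t + 1 / (N + 1) := by
    rw [div_lt_iff₀ hN0, add_mul, one_div_mul_cancel hN0.ne']
    exact Nat.ceil_lt_add_one htN
  rw [Real.dist_eq, abs_sub_lt_iff]
  constructor <;> linarith

theorem stmt_9_general (f : ℝ → ℝ) (m : ℕ)
    (hf : ContinuousOn f (Set.Ici 0))
    (hdiff : ∀ t : ℝ, 0 ≤ t → ∀ τ : ℝ, 0 < τ →
      ∑ k ∈ range (m + 1), ((-1 : ℝ)) ^ (m - k) * (m.choose k) * f (t + k * τ) = 0) :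
    ∃ p : Polynomial ℝ, p.degree < m ∧ ∀ t : ℝ, 0 ≤ t → f t = p.eval t := by
  have lattice : ∀ h : ℝ, 0 < h →
      ∃ Q : ℝ[X], Q.degree < m ∧ ∀ n : ℕ, f (n • h) = Q.eval (n • h) := fun h hh =>
    exists_degree_lt_eval_nsmul_eq hh.ne' fun n => by
      rw [fwdDiff_iter_eq_sum_mul]; exact hdiff _ (by positivity) h hh
  obtain ⟨P, hPdeg, hP⟩ := lattice 1 one_pos
  have hP_dense : Set.EqOn f P.eval {x | ∃ n N : ℕ, x = n / (N + 1)} := by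
    rintro _ ⟨n, N, rfl⟩
    obtain ⟨Q, -, hQ⟩ := lattice (1 / (N + 1)) (by positivity)
    have hQP : Q = P := by
      refine eq_of_infinite_eval_eq Q P <|
        Set.infinite_of_injective_forall_mem Nat.cast_injective fun j : ℕ => ?_
      have hj : (j * (N + 1)) • (1 / (N + 1) : ℝ) = j • 1 := by
        rw [nsmul_eq_mul, nsmul_eq_mul]; push_cast; field_simp
      have hQP_j := (hQ (j * (N + 1))).symm.trans ((congrArg f hj).trans (hP j))
      rw [hj] at hQP_j
      simpa using hQP_j
    simpa [hQP, div_eq_mul_one_div (n : ℝ)] using hQ n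
  refine ⟨P, hPdeg, fun t ht => ?_⟩
  refine hP_dense.of_subset_closure hf P.continuous.continuousOn ?_
    Real.Ici_zero_subset_closure_natCast_div_succ ht
  rintro _ ⟨n, N, rfl⟩
  exact Set.mem_Ici.mpr (by positivity)

theorem stmt_9 (f : ℝ → ℝ) (m : ℕ) (hm : 0 < m)
    (hf : ContinuousOn f (Set.Ici 0))
    (hdiff : ∀ t : ℝ, 0 ≤ t → ∀ τ : ℝ, 0 < τ →
      ∑ k ∈ range (m + 1), ((-1 : ℝ)) ^ (m - k) * (m.choose k) * f (t + k * τ) = 0) :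
    ∃ p : Polynomial ℝ, p.degree < m ∧ ∀ t : ℝ, 0 ≤ t → f t = p.eval t :=
  stmt_9_general f m hf hdiff
end

section
/- Let {S(t)}_{t≥0} be the right translation semigroup on L²(ℝ⁺, ρ) with ρ a continuous right admissible weight, defined by (S(t)f)(s) = 0 for s ≤ t and f(s - t) for s > t. If ρ is a polynomial of degree less than m, then S(t) is an m-isometry for every t > 0. -/
open Finset MeasureTheory Polynomial
open scoped fwdDiff

/-! On `(0, ∞)` the weight is a polynomial of degree `< m`, so for each `s` the alternating
binomial sum of `ρ (s + k t)` is an `m`-th forward difference of a polynomial and vanishes.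
Admissibility bounds `ρ (s + k t)` by a multiple of `ρ s`, which makes every integral finite, so
the sum can be taken inside the integral. -/

theorem Polynomial.sum_range_alternating_choose_mul_eval_add_mul_eq_zero {R : Type*} [CommRing R]
    {p : R[X]} {m : ℕ} (hp : p.natDegree < m) (y t : R) :
    ∑ k ∈ range (m + 1), (-1 : R) ^ (m - k) * m.choose k * p.eval (y + k * t) = 0 := by
  have hq : (p.comp (C y + C t * X)).natDegree < m :=
    calc _ ≤ p.natDegree * (C y + C t * X).natDegree := natDegree_comp_le
      _ ≤ p.natDegree * 1 := by gcongr; compute_degree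
      _ < m := by rwa [mul_one]
  have h := fwdDiff_iter_eq_sum_shift 1 (p.comp (C y + C t * X)).eval m 0
  rw [fwdDiff_iter_eq_zero_of_degree_lt hq, Pi.zero_apply, eq_comm] at h
  convert h using 2 with k
  simp only [eval_comp, eval_add, eval_mul, eval_C, eval_X, zero_add, nsmul_eq_mul, mul_one,
    zsmul_eq_mul]
  push_cast
  rw [mul_comm t]

theorem MeasureTheory.IntegrableOn.mul_comp_add_of_le {g ρ : ℝ → ℝ} {a C : ℝ}
    (hg : AEStronglyMeasurable g (volume.restrict (Set.Ioi 0)))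
    (hρ : ContinuousOn ρ (Set.Ioi 0)) (ha : 0 ≤ a)
    (hρ_nonneg : ∀ s, 0 < s → 0 ≤ ρ s)
    (hle : ∀ s, 0 < s → ρ (s + a) ≤ C * ρ s)
    (hint : IntegrableOn (fun s => g s * ρ s) (Set.Ioi 0)) :
    IntegrableOn (fun s => g s * ρ (s + a)) (Set.Ioi 0) := by
  have hρa : ContinuousOn (fun s => ρ (s + a)) (Set.Ioi 0) :=
    hρ.comp (by fun_prop) fun s (hs : 0 < s) => show 0 < s + a by linarith
  refine (hint.const_mul C).mono (hg.mul (hρa.aestronglyMeasurable measurableSet_Ioi)) ?_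
  filter_upwards [ae_restrict_mem measurableSet_Ioi] with s (hs : 0 < s)
  have hsa : 0 < s + a := by linarith
  simp only [norm_mul, Real.norm_of_nonneg (hρ_nonneg _ hsa), Real.norm_of_nonneg (hρ_nonneg _ hs),
    Real.norm_eq_abs]
  calc |g s| * ρ (s + a) ≤ |g s| * (C * ρ s) := by gcongr; exact hle s hs
    _ ≤ |C| * (|g s| * ρ s) := by
      rw [mul_left_comm]
      exact mul_le_mul_of_nonneg_right (le_abs_self C) (by have := hρ_nonneg s hs; positivity)

/-- Right translation semigroup on `L²(ℝ⁺, ρ)`: since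
`‖S(t)^k f‖² = ∫₀^∞ ‖f s‖² ρ(s + k t) ds`, the `m`-isometry condition for `S(t)`
is the vanishing of the alternating binomial sum of these integrals. -/
theorem stmt_15 (ρ : ℝ → ℝ) (m : ℕ) (hm : 0 < m)
    (hcont : ContinuousOn ρ (Set.Ioi 0))
    (hpos : ∀ s : ℝ, 0 < s → 0 < ρ s)
    (hadm : ∃ M : ℝ, 1 ≤ M ∧ ∃ ω : ℝ, ∀ τ : ℝ, 0 < τ → ∀ t : ℝ, 0 < t →
      ρ (t + τ) ≤ M * Real.exp (ω * t) * ρ τ)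
    (p : Polynomial ℝ) (hdeg : p.degree < m) (hp : ∀ s : ℝ, 0 < s → ρ s = p.eval s) :
    ∀ t : ℝ, 0 < t → ∀ f : ℝ → ℂ, Measurable f →
      IntegrableOn (fun s => ‖f s‖ ^ 2 * ρ s) (Set.Ioi 0) →
      ∑ k ∈ range (m + 1), ((-1 : ℝ)) ^ (m - k) * (m.choose k) *
        (∫ s in Set.Ioi (0 : ℝ), ‖f s‖ ^ 2 * ρ (s + k * t)) = 0 := by
  intro t ht f hf hint
  obtain ⟨M, hM, ω, hρ_le⟩ := hadm
  have hshift (a : ℝ) (ha : 0 ≤ a) (s : ℝ) (hs : 0 < s) :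
      ρ (s + a) ≤ M * Real.exp (ω * a) * ρ s := by
    rcases ha.eq_or_lt with rfl | ha
    · simpa using le_mul_of_one_le_left (hpos s hs).le hM
    · simpa [add_comm] using hρ_le s hs a ha
  have hint_shift (k : ℕ) : IntegrableOn (fun s => ‖f s‖ ^ 2 * ρ (s + k * t)) (Set.Ioi 0) :=
    hint.mul_comp_add_of_le (hf.norm.pow_const 2).aestronglyMeasurable hcont (by positivity)
      (fun s hs => (hpos s hs).le) (hshift _ (by positivity))
  have hp_nat : p.natDegree < m := by
    rcases eq_or_ne p 0 with rfl | hp0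
    · simpa using hm
    · exact (natDegree_lt_iff_degree_lt hp0).mpr hdeg
  simp_rw [← integral_const_mul]
  rw [← integral_finsetSum _ fun k _ => (hint_shift k).const_mul _]
  refine setIntegral_eq_zero_of_forall_eq_zero fun s (hs : 0 < s) => ?_
  calc ∑ k ∈ range (m + 1), (-1) ^ (m - k) * (m.choose k : ℝ) * (‖f s‖ ^ 2 * ρ (s + k * t))
      = ‖f s‖ ^ 2 * ∑ k ∈ range (m + 1), (-1) ^ (m - k) * (m.choose k : ℝ) * p.eval (s + k * t) := by
        rw [mul_sum]
        refine sum_congr rfl fun k _ => ?_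
        rw [hp _ (by positivity)]
        ring
    _ = 0 := by rw [sum_range_alternating_choose_mul_eval_add_mul_eq_zero hp_nat, mul_zero]
end

section
/- Let T be a bounded operator on a Hilbert space and r a positive integer such that both T^r and T^{r+1} are m-isometries. Then T is an m-isometry. -/
/-!
Write `S` for the shift `f ↦ f (· + 1)` on sequences, so that `Δ_[s] = S ^ s - 1`. For each `x`,
the hypotheses say that `(S ^ r - 1) ^ m` and `(S ^ (r + 1) - 1) ^ m` annihilate the sequence
`n ↦ ‖T ^ n x‖ ^ 2`. Dividing `X ^ r - 1` and `X ^ (r + 1) - 1` by `X - 1` leaves the geometric sums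
`1 + ⋯ + X ^ (r - 1)` and `1 + ⋯ + X ^ r`, which are coprime in `ℤ[X]`; hence `(X - 1) ^ m` is a
combination of `(X ^ r - 1) ^ m` and `(X ^ (r + 1) - 1) ^ m`, and `(S - 1) ^ m` annihilates the
sequence as well.
-/

open Finset Polynomial fwdDiff fwdDiff_aux

theorem isCoprime_geom_sum_geom_sum_succ {R : Type*} [CommRing R] (x : R) (r : ℕ) :
    IsCoprime (∑ i ∈ range r, x ^ i) (∑ i ∈ range (r + 1), x ^ i) :=
  ⟨-x, 1, by linear_combination sum_range_succ (x ^ ·) r - geom_sum_mul x r⟩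

theorem exists_mul_add_mul_eq_X_sub_one_pow (R : Type*) [CommRing R] (r m : ℕ) :
    ∃ u v : R[X], u * (X ^ r - 1) ^ m + v * (X ^ (r + 1) - 1) ^ m = (X - 1) ^ m := by
  obtain ⟨u, v, huv⟩ := (isCoprime_geom_sum_geom_sum_succ (X : R[X]) r).pow (m := m) (n := m)
  refine ⟨u, v, ?_⟩
  rw [← geom_sum_mul, ← geom_sum_mul X (r + 1), mul_pow, mul_pow, ← mul_assoc, ← mul_assoc,
    ← add_mul, huv, one_mul]

section

variable {M G : Type*} [AddCommMonoid M] [AddCommGroup G]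

theorem fwdDiffₗ_nsmul (h : M) (n : ℕ) :
    fwdDiffₗ M G (n • h) = shiftₗ M G h ^ n - 1 := by
  ext f y
  simp [shiftₗ_pow_apply, fwdDiff]

theorem fwdDiff_iter_eq_zero_of_step_succ {f : M → G} {h : M} {r m : ℕ}
    (hr : Δ_[r • h] ^[m] f = 0) (hr₁ : Δ_[(r + 1) • h] ^[m] f = 0) :
    Δ_[h] ^[m] f = 0 := by
  have hΔ : ∀ n, fwdDiffₗ M G (n • h) ^ m = aeval (shiftₗ M G h) (((X : ℤ[X]) ^ n - 1) ^ m) := by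
    intro n
    simp [fwdDiffₗ_nsmul]
  obtain ⟨u, v, huv⟩ := exists_mul_add_mul_eq_X_sub_one_pow ℤ r m
  have hcomb := congr_arg (aeval (shiftₗ M G h)) huv
  have hΔ₁ := hΔ 1
  rw [one_nsmul, pow_one] at hΔ₁
  rw [map_add, map_mul, map_mul, ← hΔ, ← hΔ, ← hΔ₁] at hcomb
  rw [← coe_fwdDiffₗ_pow, ← hcomb]
  ext y
  simp [coe_fwdDiffₗ_pow, hr, hr₁]

end

theorem fwdDiff_iter_norm_sq_pow_apply {𝕜 E : Type*} [Semiring 𝕜] [SeminormedAddCommGroup E]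
    [Module 𝕜 E] (T : E →L[𝕜] E) (x : E) (s m n : ℕ) :
    Δ_[s] ^[m] (fun n ↦ ‖(T ^ n) x‖ ^ 2) n =
      ∑ k ∈ range (m + 1), (-1 : ℝ) ^ (m - k) * m.choose k * ‖((T ^ s) ^ k) ((T ^ n) x)‖ ^ 2 := by
  rw [fwdDiff_iter_eq_sum_shift]
  refine sum_congr rfl fun k _ ↦ ?_
  have horbit : ((T ^ s) ^ k) ((T ^ n) x) = (T ^ (n + k • s)) x := by
    rw [← pow_mul, add_comm, pow_add, smul_eq_mul, mul_comm]
    rfl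
  rw [horbit, zsmul_eq_mul]
  norm_num

theorem stmt_19_general {H : Type*} [NormedAddCommGroup H] [InnerProductSpace ℂ H]
    (T : H →L[ℂ] H) (m : ℕ) (r : ℕ)
    (hTr : ∀ x : H, ∑ k ∈ range (m + 1),
      ((-1 : ℝ)) ^ (m - k) * (m.choose k) * ‖((T ^ r) ^ k) x‖ ^ 2 = 0)
    (hTr1 : ∀ x : H, ∑ k ∈ range (m + 1),
      ((-1 : ℝ)) ^ (m - k) * (m.choose k) * ‖((T ^ (r + 1)) ^ k) x‖ ^ 2 = 0) :
    ∀ x : H, ∑ k ∈ range (m + 1),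
      ((-1 : ℝ)) ^ (m - k) * (m.choose k) * ‖(T ^ k) x‖ ^ 2 = 0 := by
  intro x
  have hΔ (s : ℕ) (hs : ∀ y : H, ∑ k ∈ range (m + 1),
      ((-1 : ℝ)) ^ (m - k) * (m.choose k) * ‖((T ^ s) ^ k) y‖ ^ 2 = 0) :
      Δ_[s • 1] ^[m] (fun n ↦ ‖(T ^ n) x‖ ^ 2) = 0 := by
    ext n
    rw [smul_eq_mul, mul_one, fwdDiff_iter_norm_sq_pow_apply, Pi.zero_apply, hs]
  have h₁ := congr_fun (fwdDiff_iter_eq_zero_of_step_succ (hΔ r hTr) (hΔ (r + 1) hTr1)) 0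
  rw [fwdDiff_iter_norm_sq_pow_apply] at h₁
  simpa only [pow_one, pow_zero, one_apply_eq_self, Pi.zero_apply] using h₁

theorem stmt_19 {H : Type*} [NormedAddCommGroup H] [InnerProductSpace ℂ H] [CompleteSpace H]
    (T : H →L[ℂ] H) (m : ℕ) (hm : 0 < m) (r : ℕ) (hr : 0 < r)
    (hTr : ∀ x : H, ∑ k ∈ range (m + 1),
      ((-1 : ℝ)) ^ (m - k) * (m.choose k) * ‖((T ^ r) ^ k) x‖ ^ 2 = 0)
    (hTr1 : ∀ x : H, ∑ k ∈ range (m + 1),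
      ((-1 : ℝ)) ^ (m - k) * (m.choose k) * ‖((T ^ (r + 1)) ^ k) x‖ ^ 2 = 0) :
    ∀ x : H, ∑ k ∈ range (m + 1),
      ((-1 : ℝ)) ^ (m - k) * (m.choose k) * ‖(T ^ k) x‖ ^ 2 = 0 :=
  stmt_19_general T m r hTr hTr1
end
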